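/- For every θ ∈ ℝᵈ with ‖θ‖ < √d, the Kullback–Leibler divergence between the standard Gaussian and the fitted mixture on the hypersurface σ² = 1 − ‖θ‖²/d satisfies D_KL[ N(0, I_d) ∥ G(θ, 1 − ‖θ‖²/d) ] = ℓ(‖θ‖) − ℓ(0). -/

import Mathlib

open MeasureTheory Real Set
open scoped ENNReal

noncomputable section

namespace OMDA

/-- `t_p(x)`. -/
def tp (p x : ℝ) : ℝ :=
  (p * Real.exp x - (1 - p) * Real.exp (-x)) / (p * Real.exp x + (1 - p) * Real.exp (-x))

/-- `c_p(x)`. -/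
def cp (p x : ℝ) : ℝ := p * Real.exp x + (1 - p) * Real.exp (-x)

/-- The standard normal density on `ℝ`. -/
def phi1 (z : ℝ) : ℝ := Real.exp (-z ^ 2 / 2) / Real.sqrt (2 * π)

/-- Expectation of `g Z` for `Z ∼ N(0,1)`. -/
def gexp (g : ℝ → ℝ) : ℝ := ∫ z : ℝ, g z * phi1 z

/-- The univariate population EM map `m(θ)`. -/
def m (p : ℝ) (d : ℕ) (θ : ℝ) : ℝ :=
  gexp fun z => tp p (θ * z / (1 - θ ^ 2 / d)) * z

/-- The radial negative population log-likelihood `ℓ(θ)`. -/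
def ell (p : ℝ) (d : ℕ) (θ : ℝ) : ℝ :=
  (d / 2 : ℝ) * Real.log (2 * π * (1 - θ ^ 2 / d)) + ((d : ℝ) + θ ^ 2) / (2 * (1 - θ ^ 2 / d))
    - gexp fun z => Real.log (cp p (θ * z / (1 - θ ^ 2 / d)))

/-- `q := 1 - (2p-1)²/2`. -/
def qp (p : ℝ) : ℝ := 1 - (2 * p - 1) ^ 2 / 2

/-- The initialization radius `√(d·(2+q−√(8q+q²))/2)`. -/
def θmax (p : ℝ) (d : ℕ) : ℝ :=
  Real.sqrt ((d : ℝ) * (2 + qp p - Real.sqrt (8 * qp p + qp p ^ 2)) / 2)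

/-- `ρ := (1+θ₀²/d)/(1−θ₀²/d)² · (1 − (2p−1)²/2)`. -/
def ρc (p : ℝ) (d : ℕ) (θ0 : ℝ) : ℝ :=
  (1 + θ0 ^ 2 / d) / (1 - θ0 ^ 2 / d) ^ 2 * (1 - (2 * p - 1) ^ 2 / 2)

/-- `ℝᵈ` with the Euclidean norm. -/
abbrev E (d : ℕ) := EuclideanSpace ℝ (Fin d)

/-- Density of `N(ν, σ²·I_d)` on `ℝᵈ`. -/
def gpdf (d : ℕ) (ν : E d) (σ2 : ℝ) (x : E d) : ℝ :=
  (2 * π * σ2) ^ (-(d : ℝ) / 2) * Real.exp (-‖x - ν‖ ^ 2 / (2 * σ2))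

/-- Density of the mixture `(1−p)·N(ν−θ, σ²I) + p·N(ν+θ, σ²I)`. -/
def mixPdf (p : ℝ) (d : ℕ) (ν θ : E d) (σ2 : ℝ) (x : E d) : ℝ :=
  (1 - p) * gpdf d (ν - θ) σ2 x + p * gpdf d (ν + θ) σ2 x

/-- The population EM operator `M(θ)`. -/
def Mop (p : ℝ) (d : ℕ) (θ : E d) : E d :=
  ∫ z : E d, (gpdf d 0 1 z * tp p ((inner ℝ θ z : ℝ) / (1 - ‖θ‖ ^ 2 / d))) • z

/-- KL divergence `D_KL[N(0,I_d) ∥ G(θ, σ²)]`, written via densities. -/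
def klStd (p : ℝ) (d : ℕ) (θ : E d) (σ2 : ℝ) : ℝ :=
  ∫ z : E d, gpdf d 0 1 z * Real.log (gpdf d 0 1 z / mixPdf p d 0 θ σ2 z)

/-- The standard normal cdf `Φ`. -/
def stdNormCdf (x : ℝ) : ℝ := ∫ z in Iic x, phi1 z

/-- Misclassification probability of a classifier `h` under the distribution `D`
with class-conditional laws `N(±μ, I_d)` and balanced classes. -/
def errProb (d : ℕ) (μ : E d) (h : E d → ℝ) : ℝ :=
  (1 / 2) * (∫ x in {x | h x ≠ 1}, gpdf d μ 1 x)
    + (1 / 2) * (∫ x in {x | h x ≠ -1}, gpdf d (-μ) 1 x)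

/-- The measure `N(ν, I_d)` on `ℝᵈ`, via its density. -/
def gaussMeasure (d : ℕ) (ν : E d) : Measure (E d) :=
  volume.withDensity fun x => ENNReal.ofReal (gpdf d ν 1 x)

/-- The standard Gaussian measure `N(0, I_d)`. -/
def stdGaussMeasure (d : ℕ) : Measure (E d) := gaussMeasure d 0

/-- The joint distribution `D` of `(X, Y)` on `ℝᵈ × ℝ`. -/
def Dmeas (d : ℕ) (μ : E d) : Measure (E d × ℝ) :=
  (1 / 2 : ℝ≥0∞) • ((gaussMeasure d μ).prod (Measure.dirac (1 : ℝ)))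
    + (1 / 2 : ℝ≥0∞) • ((gaussMeasure d (-μ)).prod (Measure.dirac (-1 : ℝ)))

/-- Chi-squared measure with `k` degrees of freedom. -/
def chiSqMeasure (k : ℕ) : Measure ℝ := ProbabilityTheory.gammaMeasure ((k : ℝ) / 2) (1 / 2)


/-! ### Auxiliary lemmas for Statement 19 -/

section Aux

open Filter Asymptotics Finset Topology

lemma sqrt_two_pi_pos : 0 < Real.sqrt (2 * π) := Real.sqrt_pos.2 (by positivity)

lemma phi1_def' (x : ℝ) : phi1 x = Real.exp (-(1/2) * x ^ 2) * (Real.sqrt (2 * π))⁻¹ := by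
  unfold phi1; rw [div_eq_mul_inv]; ring_nf

lemma phi1_pos (x : ℝ) : 0 < phi1 x := div_pos (Real.exp_pos _) sqrt_two_pi_pos

lemma continuous_phi1 : Continuous phi1 := by
  unfold phi1; fun_prop

lemma integrable_phi1 : Integrable phi1 := by
  have h : phi1 = fun x => Real.exp (-(1/2) * x ^ 2) * (Real.sqrt (2 * π))⁻¹ :=
    funext phi1_def'
  rw [h]
  exact (integrable_exp_neg_mul_sq one_half_pos).mul_const _

lemma integral_phi1 : ∫ x, phi1 x = 1 := by
  simp_rw [phi1_def']
  rw [integral_mul_const, integral_gaussian]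
  rw [show π / (1/2 : ℝ) = 2 * π by ring]
  exact mul_inv_cancel₀ sqrt_two_pi_pos.ne'

lemma integrable_sq_exp : Integrable fun x : ℝ => x ^ 2 * Real.exp (-(1/2) * x ^ 2) := by
  have h := integrable_rpow_mul_exp_neg_mul_sq (b := (1/2 : ℝ)) one_half_pos
    (s := 2) (by norm_num)
  have heq : (fun x : ℝ => x ^ (2 : ℝ) * Real.exp (-(1/2) * x ^ 2))
      = fun x : ℝ => x ^ 2 * Real.exp (-(1/2) * x ^ 2) := by
    funext x
    rw [show (2 : ℝ) = ((2 : ℕ) : ℝ) by norm_num, Real.rpow_natCast]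
  rwa [heq] at h

lemma integrable_phi1_sq : Integrable fun x => phi1 x * x ^ 2 := by
  simp_rw [phi1_def']
  have : (fun x : ℝ => Real.exp (-(1/2) * x ^ 2) * (Real.sqrt (2*π))⁻¹ * x ^ 2)
      = fun x : ℝ => (x ^ 2 * Real.exp (-(1/2) * x ^ 2)) * (Real.sqrt (2*π))⁻¹ := by
    funext x; ring
  rw [this]
  exact integrable_sq_exp.mul_const _

lemma integrable_phi1_abs : Integrable fun x => phi1 x * |x| := by
  simp_rw [phi1_def']
  have : (fun x : ℝ => Real.exp (-(1/2) * x ^ 2) * (Real.sqrt (2*π))⁻¹ * |x|)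
      = fun x : ℝ => |x * Real.exp (-(1/2) * x ^ 2)| * (Real.sqrt (2*π))⁻¹ := by
    funext x; rw [abs_mul, abs_of_nonneg (Real.exp_pos _).le]; ring
  rw [this]
  exact ((integrable_mul_exp_neg_mul_sq one_half_pos).abs).mul_const _

lemma tendsto_mul_exp_atTop : Tendsto (fun x : ℝ => x * Real.exp (-(1/2) * x ^ 2))
    atTop (𝓝 0) := by
  have h1 := rpow_mul_exp_neg_mul_sq_isLittleO_exp_neg (b := (1/2 : ℝ)) one_half_pos 1
  have h2 : Tendsto (fun x : ℝ => Real.exp (-(1/2) * x)) atTop (𝓝 0) := by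
    apply Real.tendsto_exp_atBot.comp
    exact (tendsto_const_mul_atBot_of_neg (by norm_num : (-(1/2) : ℝ) < 0)).2 tendsto_id
  have h3 := h1.isBigO.trans_tendsto h2
  have heq : (fun x : ℝ => x ^ (1 : ℝ) * Real.exp (-(1/2) * x ^ 2))
      = fun x : ℝ => x * Real.exp (-(1/2) * x ^ 2) := by
    funext x; rw [Real.rpow_one]
  rwa [heq] at h3

lemma tendsto_mul_exp_atBot : Tendsto (fun x : ℝ => x * Real.exp (-(1/2) * x ^ 2))
    atBot (𝓝 0) := by
  have h := (tendsto_mul_exp_atTop.neg).comp tendsto_neg_atBot_atTop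
  simp only [Function.comp_def, neg_mul, neg_neg, neg_sq, neg_zero] at h
  exact h.congr fun x => by rw [neg_mul]

lemma integral_sq_exp : ∫ x : ℝ, x ^ 2 * Real.exp (-(1/2) * x ^ 2) = Real.sqrt (2 * π) := by
  have hderiv : ∀ x : ℝ, HasDerivAt (fun x : ℝ => x * Real.exp (-(1/2) * x ^ 2))
      (Real.exp (-(1/2) * x ^ 2) - x ^ 2 * Real.exp (-(1/2) * x ^ 2)) x := by
    intro x
    have h1 : HasDerivAt (fun x : ℝ => -(1/2 : ℝ) * x ^ 2) (-(1/2 : ℝ) * (2 * x)) x := by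
      simpa using ((hasDerivAt_pow 2 x).const_mul (-(1/2 : ℝ)))
    have h2 := (h1.exp)
    have h3 := (hasDerivAt_id' x).fun_mul h2
    refine h3.congr_deriv ?_
    ring
  have hint : Integrable fun x : ℝ =>
      Real.exp (-(1/2) * x ^ 2) - x ^ 2 * Real.exp (-(1/2) * x ^ 2) :=
    (integrable_exp_neg_mul_sq one_half_pos).sub integrable_sq_exp
  have h0 := integral_of_hasDerivAt_of_tendsto hderiv hint
    tendsto_mul_exp_atBot tendsto_mul_exp_atTop
  rw [sub_zero] at h0
  have hsub := integral_sub (integrable_exp_neg_mul_sq one_half_pos) integrable_sq_exp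
  rw [h0] at hsub
  have hg : ∫ x : ℝ, Real.exp (-(1/2) * x ^ 2) = Real.sqrt (2 * π) := by
    rw [integral_gaussian, show π / (1/2 : ℝ) = 2 * π by ring]
  linarith [hsub.symm]

lemma integral_phi1_sq : ∫ x, phi1 x * x ^ 2 = 1 := by
  simp_rw [phi1_def']
  have : (fun x : ℝ => Real.exp (-(1/2) * x ^ 2) * (Real.sqrt (2*π))⁻¹ * x ^ 2)
      = fun x : ℝ => (x ^ 2 * Real.exp (-(1/2) * x ^ 2)) * (Real.sqrt (2*π))⁻¹ := by
    funext x; ring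
  rw [this, integral_mul_const, integral_sq_exp]
  exact mul_inv_cancel₀ sqrt_two_pi_pos.ne'

/-! ### `cp` facts -/

variable {p : ℝ}

lemma cp_pos (hp : p ∈ Set.Ioo (1/2 : ℝ) 1) (x : ℝ) : 0 < cp p x := by
  have h1 : 0 < p := by linarith [hp.1]
  have h2 : 0 ≤ 1 - p := by linarith [hp.2]
  exact add_pos_of_pos_of_nonneg (mul_pos h1 (Real.exp_pos _))
    (mul_nonneg h2 (Real.exp_pos _).le)

lemma cp_zero : cp p 0 = 1 := by simp [cp]

lemma cp_le (hp : p ∈ Set.Ioo (1/2 : ℝ) 1) (x : ℝ) : cp p x ≤ Real.exp |x| := by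
  have h1 : 0 ≤ p := by linarith [hp.1]
  have h2 : 0 ≤ 1 - p := by linarith [hp.2]
  have e1 : Real.exp x ≤ Real.exp |x| := Real.exp_le_exp.2 (le_abs_self x)
  have e2 : Real.exp (-x) ≤ Real.exp |x| := Real.exp_le_exp.2 (neg_le_abs x)
  calc cp p x ≤ p * Real.exp |x| + (1 - p) * Real.exp |x| := by
        unfold cp
        exact add_le_add (mul_le_mul_of_nonneg_left e1 h1) (mul_le_mul_of_nonneg_left e2 h2)
    _ = Real.exp |x| := by ring

lemma cp_ge (hp : p ∈ Set.Ioo (1/2 : ℝ) 1) (x : ℝ) :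
    min p (1 - p) * Real.exp |x| ≤ cp p x := by
  have h1 : 0 ≤ p := by linarith [hp.1]
  have h2 : 0 ≤ 1 - p := by linarith [hp.2]
  rcases le_or_gt 0 x with hx | hx
  · rw [abs_of_nonneg hx]
    calc min p (1 - p) * Real.exp x ≤ p * Real.exp x :=
          mul_le_mul_of_nonneg_right (min_le_left _ _) (Real.exp_pos _).le
      _ ≤ cp p x := le_add_of_nonneg_right (mul_nonneg h2 (Real.exp_pos _).le)
  · rw [abs_of_neg hx]
    calc min p (1 - p) * Real.exp (-x) ≤ (1 - p) * Real.exp (-x) :=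
          mul_le_mul_of_nonneg_right (min_le_right _ _) (Real.exp_pos _).le
      _ ≤ cp p x := le_add_of_nonneg_left (mul_nonneg h1 (Real.exp_pos _).le)

lemma abs_log_cp_le (hp : p ∈ Set.Ioo (1/2 : ℝ) 1) (x : ℝ) :
    |Real.log (cp p x)| ≤ |x| + |Real.log (min p (1 - p))| := by
  have hm : 0 < min p (1 - p) := lt_min (by linarith [hp.1]) (by linarith [hp.2])
  rw [abs_le]
  constructor
  · have h1 : Real.log (min p (1 - p)) + |x| ≤ Real.log (cp p x) := by
      have := Real.log_le_log (by positivity) (cp_ge hp x)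
      rwa [Real.log_mul hm.ne' (Real.exp_pos _).ne', Real.log_exp] at this
    have h2 : -|Real.log (min p (1 - p))| ≤ Real.log (min p (1 - p)) := neg_abs_le _
    linarith [abs_nonneg x]
  · have h1 : Real.log (cp p x) ≤ |x| := by
      have := Real.log_le_log (cp_pos hp x) (cp_le hp x)
      rwa [Real.log_exp] at this
    linarith [abs_nonneg (Real.log (min p (1 - p)))]

lemma continuous_cp : Continuous (cp p) := by unfold cp; fun_prop

lemma continuous_log_cp (hp : p ∈ Set.Ioo (1/2 : ℝ) 1) :
    Continuous fun x => Real.log (cp p x) :=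
  continuous_cp.log fun x => (cp_pos hp x).ne'

lemma integrable_phi1_logcp (hp : p ∈ Set.Ioo (1/2 : ℝ) 1) (c : ℝ) :
    Integrable fun t => phi1 t * Real.log (cp p (c * t)) := by
  set K := |Real.log (min p (1 - p))| with hK
  have hg : Integrable fun t => |c| * (phi1 t * |t|) + K * phi1 t :=
    (integrable_phi1_abs.const_mul _).add (integrable_phi1.const_mul _)
  refine Integrable.mono' hg ?_ ?_
  · exact (continuous_phi1.mul
      ((continuous_log_cp hp).comp (continuous_const.mul continuous_id))).aestronglyMeasurable
  · refine Filter.Eventually.of_forall fun t => ?_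
    have hb := abs_log_cp_le hp (c * t)
    have h1 : ‖phi1 t * Real.log (cp p (c * t))‖ = phi1 t * |Real.log (cp p (c * t))| := by
      rw [norm_mul, Real.norm_eq_abs, Real.norm_eq_abs, abs_of_pos (phi1_pos t)]
    rw [h1]
    calc phi1 t * |Real.log (cp p (c * t))| ≤ phi1 t * (|c * t| + K) :=
          mul_le_mul_of_nonneg_left hb (phi1_pos t).le
      _ = |c| * (phi1 t * |t|) + K * phi1 t := by rw [abs_mul]; ring

/-! ### Euclidean space reductions -/

lemma norm_sq_eq_sum {d : ℕ} (z : E d) : ‖z‖ ^ 2 = ∑ i, z i ^ 2 := by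
  rw [EuclideanSpace.norm_eq, Real.sq_sqrt (by positivity)]
  congr 1; funext i; rw [Real.norm_eq_abs, sq_abs]

lemma sqrt_two_pi_pow (d : ℕ) :
    (2 * π) ^ (-(d : ℝ) / 2) = ((Real.sqrt (2 * π)) ^ d)⁻¹ := by
  have h2π : (0 : ℝ) < 2 * π := by positivity
  have h1 : (Real.sqrt (2 * π)) ^ d = (2 * π) ^ ((d : ℝ) / 2) := by
    rw [Real.sqrt_eq_rpow, ← Real.rpow_natCast ((2 * π) ^ ((1:ℝ)/2)) d,
      ← Real.rpow_mul h2π.le]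
    congr 1; ring
  rw [h1, ← Real.rpow_neg h2π.le]
  congr 1; ring

lemma gpdf_std_eq_prod {d : ℕ} (z : E d) : gpdf d 0 1 z = ∏ i, phi1 (z i) := by
  unfold gpdf phi1
  simp only [mul_one, sub_zero]
  rw [norm_sq_eq_sum]
  have hsum : -(∑ i, z i ^ 2) / 2 = ∑ i, -z i ^ 2 / 2 := by
    rw [neg_div, Finset.sum_div, ← Finset.sum_neg_distrib]
    exact Finset.sum_congr rfl fun i _ => (neg_div _ _).symm
  rw [hsum, Real.exp_sum, Finset.prod_div_distrib, Finset.prod_const, Finset.card_univ,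
    Fintype.card_fin, sqrt_two_pi_pow, div_eq_mul_inv]
  ring

lemma measurePreserving_euclid_symm (d : ℕ) :
    MeasurePreserving ((MeasurableEquiv.toLp 2 (Fin d → ℝ)).symm.symm)
      (volume : Measure (Fin d → ℝ)) (volume : Measure (E d)) :=
  MeasurePreserving.symm _ (EuclideanSpace.volume_preserving_symm_measurableEquiv_toLp (Fin d))

lemma integral_pi_form {d : ℕ} (g : Fin d → ℝ → ℝ) :
    ∫ z : E d, ∏ i, g i (z i) = ∏ i, ∫ t, g i t := by
  have h := (measurePreserving_euclid_symm d).integral_comp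
    (MeasurableEquiv.measurableEmbedding _) (fun z : E d => ∏ i, g i (z i))
  exact h.symm.trans (integral_fintype_prod_eq_prod (ι := Fin d) g)

lemma integrable_pi_form {d : ℕ} (g : Fin d → ℝ → ℝ) (h : ∀ i, Integrable (g i)) :
    Integrable fun z : E d => ∏ i, g i (z i) := by
  have hiff := (measurePreserving_euclid_symm d).integrable_comp_emb
    (MeasurableEquiv.measurableEmbedding _) (g := fun z : E d => ∏ i, g i (z i))
  exact hiff.1 (Integrable.fintype_prod h)

lemma prod_update_eval {d : ℕ} (i0 : Fin d) (f0 : ℝ → ℝ) (w : Fin d → ℝ) :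
    ∏ i, Function.update (fun _ : Fin d => phi1) i0 (fun t => phi1 t * f0 t) i (w i)
      = (∏ i, phi1 (w i)) * f0 (w i0) := by
  rw [← Finset.mul_prod_erase Finset.univ
      (fun i => Function.update (fun _ : Fin d => phi1) i0 (fun t => phi1 t * f0 t) i (w i))
      (Finset.mem_univ i0),
    ← Finset.mul_prod_erase Finset.univ (fun i => phi1 (w i)) (Finset.mem_univ i0)]
  have h1 : ∀ i ∈ Finset.univ.erase i0,
      Function.update (fun _ : Fin d => phi1) i0 (fun t => phi1 t * f0 t) i (w i)
        = phi1 (w i) := by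
    intro i hi
    rw [Function.update_of_ne (Finset.ne_of_mem_erase hi)]
  rw [Finset.prod_congr rfl h1, Function.update_self]
  ring

lemma prod_integral_update {d : ℕ} (i0 : Fin d) (f0 : ℝ → ℝ) :
    ∏ i, ∫ t, Function.update (fun _ : Fin d => phi1) i0 (fun t => phi1 t * f0 t) i t
      = ∫ t, phi1 t * f0 t := by
  rw [Finset.prod_eq_single i0]
  · rw [Function.update_self]
  · intro b _ hb
    rw [Function.update_of_ne hb, integral_phi1]
  · intro h; exact absurd (Finset.mem_univ i0) h

lemma integrable_gpdf_std {d : ℕ} : Integrable (gpdf d 0 1) := by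
  have h : (gpdf d 0 1) = fun z : E d => ∏ i, phi1 (z i) := funext gpdf_std_eq_prod
  rw [h]
  exact integrable_pi_form _ fun _ => integrable_phi1

lemma integral_gpdf_std {d : ℕ} : ∫ z : E d, gpdf d 0 1 z = 1 := by
  simp_rw [gpdf_std_eq_prod]
  rw [integral_pi_form]
  simp [integral_phi1]

lemma exists_onb {d : ℕ} (hd : 1 ≤ d) (u : E d) (hu : ‖u‖ = 1) :
    ∃ b : OrthonormalBasis (Fin d) ℝ (E d), b ⟨0, hd⟩ = u := by
  have hcard : Module.finrank ℝ (E d) = Fintype.card (Fin d) := by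
    simp [finrank_euclideanSpace_fin]
  have horth : Orthonormal ℝ (({⟨0, hd⟩} : Set (Fin d)).restrict fun _ => u) := by
    constructor
    · intro i; exact hu
    · intro i j hij
      exact absurd (Subtype.ext ((i.2.trans j.2.symm : (i : Fin d) = j))) hij
  obtain ⟨b, hb⟩ := horth.exists_orthonormalBasis_extension_of_card_eq hcard
  exact ⟨b, hb _ rfl⟩

lemma gpdf_repr {d : ℕ} (b : OrthonormalBasis (Fin d) ℝ (E d)) (z : E d) :
    gpdf d 0 1 (b.repr z) = gpdf d 0 1 z := by
  unfold gpdf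
  rw [sub_zero, sub_zero, b.repr.norm_map]

lemma gaussian_pointwise {d : ℕ} (hd : 1 ≤ d) {θ : E d} (hθ0 : θ ≠ 0)
    (b : OrthonormalBasis (Fin d) ℝ (E d)) (hb : b ⟨0, hd⟩ = ‖θ‖⁻¹ • θ)
    (F : ℝ → ℝ) (z : E d) :
    gpdf d 0 1 z * F ((inner ℝ θ z : ℝ))
      = ∏ i, Function.update (fun _ : Fin d => phi1) ⟨0, hd⟩
          (fun t => phi1 t * F (‖θ‖ * t)) i (b.repr z i) := by
  rw [prod_update_eval]
  have hcoord : ∀ i, (b.repr z) i = (inner ℝ (b i) z : ℝ) := fun i => b.repr_apply_apply z i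
  have hnz : ‖θ‖ ≠ 0 := norm_ne_zero_iff.2 hθ0
  have hinner : (inner ℝ θ z : ℝ) = ‖θ‖ * (b.repr z) ⟨0, hd⟩ := by
    rw [hcoord, hb, real_inner_smul_left]
    field_simp
  have hprod : (∏ i, phi1 ((b.repr z) i)) = gpdf d 0 1 z := by
    rw [← gpdf_std_eq_prod (b.repr z), gpdf_repr]
  rw [hprod, hinner]

lemma integral_gaussian_inner {d : ℕ} (hd : 1 ≤ d) (θ : E d) (F : ℝ → ℝ) :
    ∫ z : E d, gpdf d 0 1 z * F ((inner ℝ θ z : ℝ)) = ∫ t, phi1 t * F (‖θ‖ * t) := by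
  rcases eq_or_ne θ 0 with rfl | hθ0
  · simp only [inner_zero_left, norm_zero, zero_mul]
    rw [integral_mul_const, integral_mul_const, integral_gpdf_std, integral_phi1]
  · have hu : ‖(‖θ‖⁻¹ • θ)‖ = 1 := norm_smul_inv_norm hθ0
    obtain ⟨b, hb⟩ := exists_onb hd _ hu
    calc ∫ z : E d, gpdf d 0 1 z * F ((inner ℝ θ z : ℝ))
        = ∫ z : E d, ∏ i, Function.update (fun _ : Fin d => phi1) ⟨0, hd⟩
            (fun t => phi1 t * F (‖θ‖ * t)) i (b.repr z i) := by
          congr 1; funext z; exact gaussian_pointwise hd hθ0 b hb F z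
      _ = ∫ w : E d, ∏ i, Function.update (fun _ : Fin d => phi1) ⟨0, hd⟩
            (fun t => phi1 t * F (‖θ‖ * t)) i (w i) :=
          b.measurePreserving_repr.integral_comp
            (b.repr.toHomeomorph.measurableEmbedding)
            (fun w : EuclideanSpace ℝ (Fin d) => ∏ i, Function.update (fun _ : Fin d => phi1)
              ⟨0, hd⟩ (fun t => phi1 t * F (‖θ‖ * t)) i (w i))
      _ = ∏ i, ∫ t, Function.update (fun _ : Fin d => phi1) ⟨0, hd⟩
            (fun t => phi1 t * F (‖θ‖ * t)) i t := integral_pi_form _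
      _ = ∫ t, phi1 t * F (‖θ‖ * t) := prod_integral_update _ _

lemma integrable_gaussian_inner {d : ℕ} (hd : 1 ≤ d) (θ : E d) (F : ℝ → ℝ)
    (hint : Integrable fun t => phi1 t * F (‖θ‖ * t)) :
    Integrable fun z : E d => gpdf d 0 1 z * F ((inner ℝ θ z : ℝ)) := by
  rcases eq_or_ne θ 0 with rfl | hθ0
  · simp only [inner_zero_left]
    exact integrable_gpdf_std.mul_const _
  · have hu : ‖(‖θ‖⁻¹ • θ)‖ = 1 := norm_smul_inv_norm hθ0
    obtain ⟨b, hb⟩ := exists_onb hd _ hu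
    have heq : (fun z : E d => gpdf d 0 1 z * F ((inner ℝ θ z : ℝ)))
        = (fun w : E d => ∏ i, Function.update (fun _ : Fin d => phi1) ⟨0, hd⟩
            (fun t => phi1 t * F (‖θ‖ * t)) i (w i)) ∘ ⇑b.repr := by
      funext z; exact gaussian_pointwise hd hθ0 b hb F z
    rw [heq]
    refine (b.measurePreserving_repr.integrable_comp_emb
      (b.repr.toHomeomorph.measurableEmbedding)).2 ?_
    refine integrable_pi_form _ fun i => ?_
    rcases eq_or_ne i ⟨0, hd⟩ with rfl | hi
    · rw [Function.update_self]; exact hint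
    · rw [Function.update_of_ne hi]; exact integrable_phi1

lemma integrable_gpdf_norm_sq {d : ℕ} :
    Integrable fun z : E d => gpdf d 0 1 z * ‖z‖ ^ 2 := by
  have heq : (fun z : E d => gpdf d 0 1 z * ‖z‖ ^ 2)
      = fun z : E d => ∑ i, ∏ j, Function.update (fun _ : Fin d => phi1) i
          (fun t => phi1 t * t ^ 2) j (z j) := by
    funext z
    rw [gpdf_std_eq_prod, norm_sq_eq_sum, Finset.mul_sum]
    refine Finset.sum_congr rfl fun i _ => ?_
    rw [prod_update_eval]
  rw [heq]
  refine integrable_finset_sum _ fun i _ => ?_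
  refine integrable_pi_form _ fun j => ?_
  rcases eq_or_ne j i with rfl | hj
  · rw [Function.update_self]; exact integrable_phi1_sq
  · rw [Function.update_of_ne hj]; exact integrable_phi1

lemma integral_gpdf_norm_sq {d : ℕ} :
    ∫ z : E d, gpdf d 0 1 z * ‖z‖ ^ 2 = d := by
  have heq : (fun z : E d => gpdf d 0 1 z * ‖z‖ ^ 2)
      = fun z : E d => ∑ i, ∏ j, Function.update (fun _ : Fin d => phi1) i
          (fun t => phi1 t * t ^ 2) j (z j) := by
    funext z
    rw [gpdf_std_eq_prod, norm_sq_eq_sum, Finset.mul_sum]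
    refine Finset.sum_congr rfl fun i _ => ?_
    rw [prod_update_eval]
  rw [heq]
  rw [integral_finset_sum _ fun i _ => integrable_pi_form _ fun j => by
    rcases eq_or_ne j i with rfl | hj
    · rw [Function.update_self]; exact integrable_phi1_sq
    · rw [Function.update_of_ne hj]; exact integrable_phi1]
  have : ∀ i : Fin d, ∫ z : E d, ∏ j, Function.update (fun _ : Fin d => phi1) i
      (fun t => phi1 t * t ^ 2) j (z j) = 1 := by
    intro i
    rw [integral_pi_form, prod_integral_update, integral_phi1_sq]
  simp [this]

end Aux

/-- the KL divergence on the hypersurface `σ² = 1 − ‖θ‖²/d`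
equals `ℓ(‖θ‖) − ℓ(0)`. -/
theorem kl_eq_ell_diff
    (p : ℝ) (hp : p ∈ Set.Ioo (1 / 2 : ℝ) 1) (d : ℕ) (hd : 1 ≤ d)
    (θ : E d) (hθ : ‖θ‖ < Real.sqrt d) :
    klStd p d θ (1 - ‖θ‖ ^ 2 / d) = ell p d ‖θ‖ - ell p d 0 := by
  have hd' : (0 : ℝ) < d := by exact_mod_cast hd
  have hsq : Real.sqrt d ^ 2 = (d : ℝ) := Real.sq_sqrt (by positivity)
  have hθ2 : ‖θ‖ ^ 2 < d := by nlinarith [norm_nonneg θ, Real.sqrt_nonneg (d : ℝ)]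
  set σ2 : ℝ := 1 - ‖θ‖ ^ 2 / d with hσ2def
  have hσ2 : 0 < σ2 := by
    have h1 : ‖θ‖ ^ 2 / d < 1 := (div_lt_one hd').2 hθ2
    rw [hσ2def]; linarith
  have h2π : (0 : ℝ) < 2 * π := by positivity
  have hgpos : ∀ z : E d, 0 < gpdf d 0 1 z := fun z =>
    mul_pos (Real.rpow_pos_of_pos (by positivity) _) (Real.exp_pos _)
  -- the mixture density in product form
  have hmix : ∀ z : E d, mixPdf p d 0 θ σ2 z
      = (2 * π * σ2) ^ (-(d : ℝ) / 2) * Real.exp (-(‖z‖ ^ 2 + ‖θ‖ ^ 2) / (2 * σ2))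
        * cp p ((inner ℝ θ z : ℝ) / σ2) := by
    intro z
    unfold mixPdf gpdf cp
    rw [zero_sub, zero_add, sub_neg_eq_add]
    have e1 : -‖z + θ‖ ^ 2 / (2 * σ2)
        = -(‖z‖ ^ 2 + ‖θ‖ ^ 2) / (2 * σ2) + -((inner ℝ θ z : ℝ) / σ2) := by
      rw [norm_add_sq_real, real_inner_comm z θ]
      field_simp
      ring
    have e2 : -‖z - θ‖ ^ 2 / (2 * σ2)
        = -(‖z‖ ^ 2 + ‖θ‖ ^ 2) / (2 * σ2) + (inner ℝ θ z : ℝ) / σ2 := by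
      rw [norm_sub_sq_real, real_inner_comm z θ]
      field_simp
      ring
    rw [e1, e2, Real.exp_add, Real.exp_add]
    ring
  -- pointwise decomposition of the integrand
  have hpoint : ∀ z : E d,
      gpdf d 0 1 z * Real.log (gpdf d 0 1 z / mixPdf p d 0 θ σ2 z)
        = gpdf d 0 1 z * (((d : ℝ) / 2) * Real.log σ2 + ‖θ‖ ^ 2 / (2 * σ2)
            + (1 / (2 * σ2) - 1 / 2) * ‖z‖ ^ 2)
          - gpdf d 0 1 z * Real.log (cp p ((inner ℝ θ z : ℝ) / σ2)) := by
    intro z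
    have hmixpos : 0 < mixPdf p d 0 θ σ2 z := by
      rw [hmix z]
      exact mul_pos (mul_pos (Real.rpow_pos_of_pos (by positivity) _) (Real.exp_pos _))
        (cp_pos hp _)
    have hg : gpdf d 0 1 z = (2 * π) ^ (-(d : ℝ) / 2) * Real.exp (-‖z‖ ^ 2 / 2) := by
      unfold gpdf; norm_num
    have hC1 : ((2 * π) ^ (-(d : ℝ) / 2) : ℝ) ≠ 0 := (Real.rpow_pos_of_pos h2π _).ne'
    have hC2 : ((2 * π * σ2) ^ (-(d : ℝ) / 2) : ℝ) ≠ 0 :=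
      (Real.rpow_pos_of_pos (by positivity) _).ne'
    have hE1 : Real.exp (-‖z‖ ^ 2 / 2) ≠ 0 := (Real.exp_pos _).ne'
    have hE2 : Real.exp (-(‖z‖ ^ 2 + ‖θ‖ ^ 2) / (2 * σ2)) ≠ 0 := (Real.exp_pos _).ne'
    have hcp : cp p ((inner ℝ θ z : ℝ) / σ2) ≠ 0 := (cp_pos hp _).ne'
    rw [Real.log_div (hgpos z).ne' hmixpos.ne', hmix z, hg,
      Real.log_mul hC1 hE1, Real.log_mul (mul_ne_zero hC2 hE2) hcp, Real.log_mul hC2 hE2,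
      Real.log_rpow h2π, Real.log_rpow (by positivity : (0 : ℝ) < 2 * π * σ2),
      Real.log_exp, Real.log_exp, Real.log_mul h2π.ne' hσ2.ne']
    ring
  -- integrability of the two pieces
  have hf1 : Integrable fun z : E d => gpdf d 0 1 z * (((d : ℝ) / 2) * Real.log σ2
      + ‖θ‖ ^ 2 / (2 * σ2) + (1 / (2 * σ2) - 1 / 2) * ‖z‖ ^ 2) := by
    have heq : (fun z : E d => gpdf d 0 1 z * (((d : ℝ) / 2) * Real.log σ2
        + ‖θ‖ ^ 2 / (2 * σ2) + (1 / (2 * σ2) - 1 / 2) * ‖z‖ ^ 2))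
        = fun z : E d => (((d : ℝ) / 2) * Real.log σ2 + ‖θ‖ ^ 2 / (2 * σ2)) * gpdf d 0 1 z
          + (1 / (2 * σ2) - 1 / 2) * (gpdf d 0 1 z * ‖z‖ ^ 2) := by
      funext z; ring
    rw [heq]
    exact (integrable_gpdf_std.const_mul _).add (integrable_gpdf_norm_sq.const_mul _)
  have harg : ∀ t : ℝ, ‖θ‖ * t / σ2 = ‖θ‖ / σ2 * t := fun t => by ring
  have hFint : Integrable fun t : ℝ => phi1 t * Real.log (cp p (‖θ‖ * t / σ2)) := by
    simp only [harg]
    exact integrable_phi1_logcp hp _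
  have hf2 : Integrable fun z : E d =>
      gpdf d 0 1 z * Real.log (cp p ((inner ℝ θ z : ℝ) / σ2)) :=
    integrable_gaussian_inner hd θ (fun t => Real.log (cp p (t / σ2))) hFint
  -- value of the left-hand side
  have hL : klStd p d θ σ2
      = (((d : ℝ) / 2) * Real.log σ2 + ‖θ‖ ^ 2 / (2 * σ2)) + (1 / (2 * σ2) - 1 / 2) * d
        - ∫ t, phi1 t * Real.log (cp p (‖θ‖ * t / σ2)) := by
    unfold klStd
    rw [show (fun z : E d => gpdf d 0 1 z * Real.log (gpdf d 0 1 z / mixPdf p d 0 θ σ2 z))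
        = fun z : E d => (gpdf d 0 1 z * (((d : ℝ) / 2) * Real.log σ2 + ‖θ‖ ^ 2 / (2 * σ2)
            + (1 / (2 * σ2) - 1 / 2) * ‖z‖ ^ 2)
          - gpdf d 0 1 z * Real.log (cp p ((inner ℝ θ z : ℝ) / σ2))) from funext hpoint]
    rw [integral_sub hf1 hf2]
    have h1 : (∫ z : E d, gpdf d 0 1 z * (((d : ℝ) / 2) * Real.log σ2 + ‖θ‖ ^ 2 / (2 * σ2)
        + (1 / (2 * σ2) - 1 / 2) * ‖z‖ ^ 2))
        = (((d : ℝ) / 2) * Real.log σ2 + ‖θ‖ ^ 2 / (2 * σ2)) + (1 / (2 * σ2) - 1 / 2) * d := by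
      rw [show (fun z : E d => gpdf d 0 1 z * (((d : ℝ) / 2) * Real.log σ2
          + ‖θ‖ ^ 2 / (2 * σ2) + (1 / (2 * σ2) - 1 / 2) * ‖z‖ ^ 2))
          = fun z : E d => (((d : ℝ) / 2) * Real.log σ2 + ‖θ‖ ^ 2 / (2 * σ2)) * gpdf d 0 1 z
            + (1 / (2 * σ2) - 1 / 2) * (gpdf d 0 1 z * ‖z‖ ^ 2) from funext fun z => by ring]
      rw [integral_add (integrable_gpdf_std.const_mul _) (integrable_gpdf_norm_sq.const_mul _),
        integral_const_mul, integral_const_mul, integral_gpdf_std, integral_gpdf_norm_sq]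
      ring
    have h2 : (∫ z : E d, gpdf d 0 1 z * Real.log (cp p ((inner ℝ θ z : ℝ) / σ2)))
        = ∫ t, phi1 t * Real.log (cp p (‖θ‖ * t / σ2)) :=
      integral_gaussian_inner hd θ (fun t => Real.log (cp p (t / σ2)))
    rw [h1, h2]
  -- value of `ell` at `0`
  have hell0 : ell p d 0 = ((d : ℝ) / 2) * Real.log (2 * π) + (d : ℝ) / 2 := by
    unfold ell gexp
    norm_num [cp_zero]
  -- value of `ell` at `‖θ‖`
  have hellθ : ell p d ‖θ‖
      = ((d : ℝ) / 2) * (Real.log (2 * π) + Real.log σ2) + ((d : ℝ) + ‖θ‖ ^ 2) / (2 * σ2)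
        - ∫ t, phi1 t * Real.log (cp p (‖θ‖ * t / σ2)) := by
    unfold ell gexp
    rw [← hσ2def, Real.log_mul h2π.ne' hσ2.ne']
    have : (∫ z, Real.log (cp p (‖θ‖ * z / σ2)) * phi1 z)
        = ∫ t, phi1 t * Real.log (cp p (‖θ‖ * t / σ2)) := by
      simp_rw [mul_comm]
    rw [this]
  rw [hL, hellθ, hell0]
  ring

end OMDA
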